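/- Let H be the operator (Hv)(y) = −v''(y) − (1/y)v'(y) + V(y)v(y)/y² with V(y) = (y⁴−6y²+1)/(1+y²)². There exist constants c > 0 and C > 0 such that for every smooth compactly supported radial function v on (0,∞): ∫₀^∞ |Hv(y)|² / (y²(1+|log y|²)) · y dy ≥ c·[ ∫₀^∞ |v''(y)|²/(y²(1+|log y|²)) · y dy + ∫₀^∞ |v'(y)|²/(y²(1+|log y|²)(1+y²)) · y dy + ∫₀^∞ |v(y)|²/(y⁴(1+|log y|²)(1+y²)) · y dy ] − C·[ ∫₀^∞ |v'(y)|²/(1+y⁶) · y dy + ∫₀^∞ |v(y)|²/(1+y⁸) · y dy ]. -/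

import Mathlib

open Real MeasureTheory

/-- The potential `V(y) = (y⁴ - 6y² + 1)/(1+y²)²`. -/
noncomputable def Vfun (y : ℝ) : ℝ := (y ^ 4 - 6 * y ^ 2 + 1) / (1 + y ^ 2) ^ 2

/-- The linearized operator `(Hv)(y) = -v'' - v'/y + V v/y²`. -/
noncomputable def Hop (v : ℝ → ℝ) : ℝ → ℝ :=
  fun y => -(deriv (deriv v) y) - (1 / y) * deriv v y + Vfun y * v y / y ^ 2

/-
In the variable `t = log y` write `v(y) = y² u(t)`. The measure `y dy` becomes `e^{2t} dt`,
and `H` becomes `-(∂² + 4∂ + 3 + q)` with `q = 1 - V(eᵗ) = 8e^{2t}/(1+e^{2t})²`, so the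
weighted norms of `Hv, v'', v', v` become integrals of `u, u', u''` against `ρ(t) = (1+t²)⁻¹`
(damped by `y²/(1+y²)` for `v'` and `v`). Expanding `|(∂² + 4∂ + 3)u|² ρ` and integrating the
cross terms by parts leaves `u''² + 10u'² + 9u²` against `ρ`, plus terms in `ρ'` and `ρ''`;
these are absorbed because `ρ' ≤ ρ` and `8ρ - 12ρ' + 3ρ'' ≥ 0` outside a bounded interval of
`t`, where `u²` is controlled by the remainder `∫ v²/(1+y⁸) y dy`. The potential term `q u` is
absorbed the same way.
-/

open Set

noncomputable section

def logWeight (t : ℝ) : ℝ := (1 + t ^ 2)⁻¹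

def logWeightDeriv (t : ℝ) : ℝ := -(2 * t) / (1 + t ^ 2) ^ 2

def logWeightDeriv2 (t : ℝ) : ℝ := (6 * t ^ 2 - 2) / (1 + t ^ 2) ^ 3

def tailWeight (t : ℝ) : ℝ := exp t ^ 6 / (1 + exp t ^ 8)

/-- `1 - V(eᵗ)`. -/
def potentialGap (t : ℝ) : ℝ := 8 * exp t ^ 2 / (1 + exp t ^ 2) ^ 2

def dampedLogWeight (t : ℝ) : ℝ := logWeight t * (exp t ^ 2 / (1 + exp t ^ 2))

/-- `v(y) = y² u(log y)`. The derivatives `u'`, `u''` are written through `v'`, `v''`, so the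
changes of variables below are algebraic identities that need no differentiability of `v`. -/
def logCoord (v : ℝ → ℝ) (t : ℝ) : ℝ := v (exp t) / exp t ^ 2

def logCoordDeriv (v : ℝ → ℝ) (t : ℝ) : ℝ := deriv v (exp t) / exp t - 2 * logCoord v t

def logCoordDeriv2 (v : ℝ → ℝ) (t : ℝ) : ℝ :=
  deriv (deriv v) (exp t) - 3 * (deriv v (exp t) / exp t) + 4 * logCoord v t

end

theorem hasDerivAt_logWeight (t : ℝ) : HasDerivAt logWeight (logWeightDeriv t) t := by
  refine (((hasDerivAt_pow 2 t).const_add 1).inv (by positivity)).congr_deriv ?_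
  simp only [logWeightDeriv]; push_cast; ring

theorem hasDerivAt_logWeightDeriv (t : ℝ) :
    HasDerivAt logWeightDeriv (logWeightDeriv2 t) t := by
  refine (((hasDerivAt_id t).const_mul 2).neg.div (((hasDerivAt_pow 2 t).const_add 1).pow 2)
    (by simp only [Pi.pow_apply]; positivity)).congr_deriv ?_
  simp only [logWeightDeriv2, id, Pi.pow_apply, Pi.neg_apply]
  field_simp
  push_cast
  ring

@[fun_prop]
theorem continuous_logWeight : Continuous logWeight :=
  (hasDerivAt_logWeight · |>.continuousAt) |> continuous_iff_continuousAt.2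

@[fun_prop]
theorem continuous_logWeightDeriv : Continuous logWeightDeriv :=
  (hasDerivAt_logWeightDeriv · |>.continuousAt) |> continuous_iff_continuousAt.2

@[fun_prop]
theorem continuous_logWeightDeriv2 : Continuous logWeightDeriv2 :=
  Continuous.div (by fun_prop) (by fun_prop) fun t => by positivity

@[fun_prop]
theorem continuous_tailWeight : Continuous tailWeight :=
  Continuous.div (by fun_prop) (by fun_prop) fun t => by positivity

@[fun_prop]
theorem continuous_potentialGap : Continuous potentialGap :=
  Continuous.div (by fun_prop) (by fun_prop) fun t => by positivity

@[fun_prop]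
theorem continuous_dampedLogWeight : Continuous dampedLogWeight :=
  continuous_logWeight.mul (Continuous.div (by fun_prop) (by fun_prop) fun t => by positivity)

theorem logWeight_pos (t : ℝ) : 0 < logWeight t := by unfold logWeight; positivity

theorem logWeight_le_one (t : ℝ) : logWeight t ≤ 1 :=
  inv_le_one_of_one_le₀ (by nlinarith [sq_nonneg t])

theorem tailWeight_pos (t : ℝ) : 0 < tailWeight t := by unfold tailWeight; positivity

theorem dampedLogWeight_nonneg (t : ℝ) : 0 ≤ dampedLogWeight t := by
  unfold dampedLogWeight logWeight; positivity

theorem dampedLogWeight_le_logWeight (t : ℝ) : dampedLogWeight t ≤ logWeight t :=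
  mul_le_of_le_one_right (logWeight_pos t).le <| (div_le_one (by positivity)).2 (by linarith)

theorem logWeightDeriv_le_logWeight (t : ℝ) : logWeightDeriv t ≤ logWeight t := by
  rw [logWeightDeriv, logWeight, div_le_iff₀ (by positivity), ← one_div, div_mul_eq_mul_div,
    le_div_iff₀ (by positivity)]
  nlinarith [sq_nonneg (t + 1), sq_nonneg t]

theorem inv_three_pow_le_exp_neg_eighteen : (3 ^ 18 : ℝ)⁻¹ ≤ exp (-18) := by
  rw [exp_neg, inv_le_inv₀ (by norm_num) (exp_pos _)]
  calc exp 18 = exp 1 ^ 18 := by rw [← exp_nat_mul]; norm_num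
    _ ≤ 3 ^ 18 := pow_le_pow_left₀ (exp_pos 1).le exp_one_lt_three.le 18

-- `8ρ - 12ρ' + 3ρ''` can be negative only for `t ∈ (-3, 0)`, where `tailWeight ≥ e⁻¹⁸ / 2`.
theorem logWeight_combination_add_tailWeight_nonneg (t : ℝ) :
    0 ≤ 8 * logWeight t - 12 * logWeightDeriv t + 3 * logWeightDeriv2 t
      + 10 ^ 12 * tailWeight t := by
  have hσ := tailWeight_pos t
  have hcomb : 8 * logWeight t - 12 * logWeightDeriv t + 3 * logWeightDeriv2 t
      = (8 * t ^ 4 + 24 * t ^ 3 + 34 * t ^ 2 + 24 * t + 2) / (1 + t ^ 2) ^ 3 := by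
    unfold logWeight logWeightDeriv logWeightDeriv2; field_simp; ring
  rw [hcomb]
  by_cases hout : 0 ≤ t ∨ t ≤ -3
  · have : 0 ≤ 8 * t ^ 4 + 24 * t ^ 3 + 34 * t ^ 2 + 24 * t + 2 := by
      rcases hout with h | h
      · positivity
      · nlinarith [mul_nonneg (sq_nonneg t) (mul_nonneg (neg_nonneg.2 (h.trans (by norm_num)))
          (by linarith : (0 : ℝ) ≤ -t - 3)), sq_nonneg (t + 1)]
    positivity
  push Not at hout
  obtain ⟨ht0, ht3⟩ := hout
  have hfrac : -1000 ≤ (8 * t ^ 4 + 24 * t ^ 3 + 34 * t ^ 2 + 24 * t + 2) / (1 + t ^ 2) ^ 3 := by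
    rw [le_div_iff₀ (by positivity)]
    nlinarith [one_le_pow₀ (by nlinarith : (1:ℝ) ≤ 1 + t ^ 2) (n := 3), sq_nonneg (t + 1)]
  have hσlow : exp (-18) / 2 ≤ tailWeight t := by
    unfold tailWeight
    rw [← exp_nat_mul, ← exp_nat_mul]
    apply div_le_div₀ (exp_pos _).le (exp_le_exp.mpr (by push_cast; linarith)) (by positivity)
    linarith [exp_le_one_iff.mpr (by push_cast; linarith : ((8:ℕ):ℝ) * t ≤ 0)]
  nlinarith [inv_three_pow_le_exp_neg_eighteen]

-- `q ≤ 2` everywhere, and `q > 1/2` only where `exp t` is bounded away from `0` and `∞`.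
theorem potentialGap_sq_le (t : ℝ) : potentialGap t ^ 2 ≤ 1 / 4 + 1024 * tailWeight t := by
  unfold potentialGap tailWeight
  set E := exp t ^ 2 with hE_def
  have hE : 0 < E := by positivity
  have h6 : exp t ^ 6 = E ^ 3 := by rw [hE_def]; ring
  have h8 : exp t ^ 8 = E ^ 4 := by rw [hE_def]; ring
  rw [h6, h8, div_pow, div_le_iff₀ (by positivity)]
  rw [show (1 / 4 + 1024 * (E ^ 3 / (1 + E ^ 4))) * ((1 + E) ^ 2) ^ 2
    = ((1 + E) ^ 4 * (1 + E ^ 4) + 4096 * E ^ 3 * (1 + E) ^ 4) / (4 * (1 + E ^ 4)) by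
      field_simp; ring]
  rw [le_div_iff₀ (by positivity)]
  nlinarith [mul_nonneg hE.le (sq_nonneg (E - 1/64)), pow_pos hE 3,
      pow_pos hE 4, pow_pos hE 5, pow_pos hE 6, pow_pos hE 7, pow_pos hE 8,
      mul_nonneg (pow_nonneg hE.le 3) (sq_nonneg (E-1))]

theorem hasDerivAt_sq_mul_weight_cross_terms {u u' u'' ρ ρ' ρ'' : ℝ → ℝ} {t : ℝ} (β γ : ℝ)
    (hu : HasDerivAt u (u' t) t) (hu' : HasDerivAt u' (u'' t) t)
    (hρ : HasDerivAt ρ (ρ' t) t) (hρ' : HasDerivAt ρ' (ρ'' t) t) :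
    HasDerivAt (fun s => β * u' s ^ 2 * ρ s + β * γ * u s ^ 2 * ρ s
        + 2 * γ * u s * u' s * ρ s - γ * u s ^ 2 * ρ' s)
      ((u'' t + β * u' t + γ * u t) ^ 2 * ρ t
        - (u'' t ^ 2 * ρ t + (β ^ 2 - 2 * γ) * u' t ^ 2 * ρ t + γ ^ 2 * u t ^ 2 * ρ t
          - β * u' t ^ 2 * ρ' t - β * γ * u t ^ 2 * ρ' t + γ * u t ^ 2 * ρ'' t)) t := by
  have h := (((((hu'.pow 2).mul hρ).const_mul β).add (((hu.pow 2).mul hρ).const_mul (β * γ))).add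
    (((hu.mul hu').mul hρ).const_mul (2 * γ))).sub (((hu.pow 2).mul hρ').const_mul γ)
  refine (h.congr_deriv ?_).congr_of_eventuallyEq (.of_forall fun s => ?_)
  · simp only [Pi.mul_apply, Pi.pow_apply]; push_cast; ring
  · simp only [Pi.add_apply, Pi.sub_apply, Pi.mul_apply, Pi.pow_apply]; ring

theorem logWeight_coercive_pointwise (t x x' x'' : ℝ) :
    1 / 2 * x'' ^ 2 * logWeight t + 3 * x' ^ 2 * logWeight t + 1 / 4 * x ^ 2 * logWeight t
        - 10 ^ 12 * x ^ 2 * tailWeight t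
        + 1 / 2 * ((x'' + 4 * x' + 3 * x) ^ 2 * logWeight t
          - (x'' ^ 2 * logWeight t + 10 * x' ^ 2 * logWeight t + 9 * x ^ 2 * logWeight t
            - 4 * x' ^ 2 * logWeightDeriv t - 12 * x ^ 2 * logWeightDeriv t
            + 3 * x ^ 2 * logWeightDeriv2 t))
      ≤ (x'' + 4 * x' + 3 * x + potentialGap t * x) ^ 2 * logWeight t := by
  have hρ := (logWeight_pos t).le
  have hσ := (tailWeight_pos t).le
  -- `(a + b)² ≥ a²/2 - b²`
  have hsplit := mul_nonneg (sq_nonneg (x'' + 4 * x' + 3 * x + 2 * (potentialGap t * x))) hρ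
  have hρ' := mul_nonneg (sq_nonneg x') (sub_nonneg.2 (logWeightDeriv_le_logWeight t))
  have hcomb := mul_nonneg (sq_nonneg x) (logWeight_combination_add_tailWeight_nonneg t)
  have hq := mul_le_mul_of_nonneg_right (potentialGap_sq_le t) (mul_nonneg (sq_nonneg x) hρ)
  have hρ1 := mul_nonneg (mul_nonneg (sq_nonneg x) hσ) (sub_nonneg.2 (logWeight_le_one t))
  have hw := mul_nonneg (sq_nonneg x) hσ
  nlinarith

theorem jet_sq_mul_weight_le {r w : ℝ} (hw : 0 ≤ w) (hwr : w ≤ r) (x x' x'' : ℝ) :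
    1 / 84 * ((x'' + 3 * x' + 2 * x) ^ 2 * r + (x' + 2 * x) ^ 2 * w + x ^ 2 * w)
      ≤ 1 / 2 * x'' ^ 2 * r + 3 * x' ^ 2 * r + 1 / 4 * x ^ 2 * r := by
  have hr : 0 ≤ r := hw.trans hwr
  nlinarith [mul_nonneg (sq_nonneg (x'' - 3 * x')) hr, mul_nonneg (sq_nonneg (x'' - 2 * x)) hr,
    mul_nonneg (sq_nonneg (3 * x' - 2 * x)) hr, mul_nonneg (sq_nonneg (x' - 2 * x)) hw,
    mul_nonneg (sq_nonneg x') (sub_nonneg.2 hwr), mul_nonneg (sq_nonneg x) (sub_nonneg.2 hwr),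
    mul_nonneg (sq_nonneg x'') hr, mul_nonneg (sq_nonneg x') hr, mul_nonneg (sq_nonneg x) hr]

section LogVariable

variable {u u' u'' : ℝ → ℝ}

theorem integrable_of_jet_eq_zero (hu : HasCompactSupport u) (hu' : ∀ t, HasDerivAt u (u' t) t)
    (hu'' : ∀ t, HasDerivAt u' (u'' t) t) {g : ℝ → ℝ} (hg : Continuous g)
    (h : ∀ t, u t = 0 → u' t = 0 → u'' t = 0 → g t = 0) : Integrable g := by
  have hd : deriv u = u' := funext fun t => (hu' t).deriv
  have hd' : deriv u' = u'' := funext fun t => (hu'' t).deriv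
  have hsupp : tsupport u' ⊆ tsupport u := hd ▸ tsupport_deriv_subset
  refine hg.integrable_of_hasCompactSupport (.intro hu fun t ht => h t ?_ ?_ ?_)
  · exact image_eq_zero_of_notMem_tsupport ht
  · exact image_eq_zero_of_notMem_tsupport fun h' => ht (hsupp h')
  · exact Function.notMem_support.1 fun h' => ht (hsupp (support_deriv_subset (hd' ▸ h')))

theorem subcoercivity_logCoord (hu : HasCompactSupport u) (hu' : ∀ t, HasDerivAt u (u' t) t)
    (hu'' : ∀ t, HasDerivAt u' (u'' t) t) (hcu'' : Continuous u'') {w : ℝ → ℝ} (hwc : Continuous w)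
    (hw0 : ∀ t, 0 ≤ w t) (hwρ : ∀ t, w t ≤ logWeight t) :
    1 / 84 * ((∫ t, (u'' t + 3 * u' t + 2 * u t) ^ 2 * logWeight t)
        + (∫ t, (u' t + 2 * u t) ^ 2 * w t) + ∫ t, u t ^ 2 * w t)
      - 10 ^ 12 * ∫ t, u t ^ 2 * tailWeight t
      ≤ ∫ t, (u'' t + 4 * u' t + 3 * u t + potentialGap t * u t) ^ 2 * logWeight t := by
  have hcu : Continuous u := continuous_iff_continuousAt.2 fun t => (hu' t).continuousAt
  have hcu' : Continuous u' := continuous_iff_continuousAt.2 fun t => (hu'' t).continuousAt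
  have hI {g : ℝ → ℝ} := integrable_of_jet_eq_zero hu hu' hu'' (g := g)
  -- `crossTerms` is a derivative: the cross terms of `(u'' + 4u' + 3u)² ρ` integrate by parts
  -- to the terms in `ρ'` and `ρ''`
  set crossTerms := fun t => (u'' t + 4 * u' t + 3 * u t) ^ 2 * logWeight t
    - (u'' t ^ 2 * logWeight t + 10 * u' t ^ 2 * logWeight t + 9 * u t ^ 2 * logWeight t
      - 4 * u' t ^ 2 * logWeightDeriv t - 12 * u t ^ 2 * logWeightDeriv t
      + 3 * u t ^ 2 * logWeightDeriv2 t) with hcrossTerms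
  have hcI := hI (g := crossTerms) (by fun_prop) fun t h0 h1 h2 => by simp [*]
  have hc0 : ∫ t, crossTerms t = 0 :=
    integral_eq_zero_of_hasDerivAt_of_integrable (fun t =>
      (hasDerivAt_sq_mul_weight_cross_terms 4 3 (hu' t) (hu'' t) (hasDerivAt_logWeight t)
        (hasDerivAt_logWeightDeriv t)).congr_deriv (by ring))
      hcI (hI (by fun_prop) fun t h0 h1 h2 => by simp [*])
  have ha := hI (g := fun t => (u'' t + 3 * u' t + 2 * u t) ^ 2 * logWeight t) (by fun_prop)
    fun t h0 h1 h2 => by simp [*]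
  have hb := hI (g := fun t => (u' t + 2 * u t) ^ 2 * w t) (by fun_prop)
    fun t h0 h1 h2 => by simp [*]
  have hd := hI (g := fun t => u t ^ 2 * w t) (by fun_prop) fun t h0 h1 h2 => by simp [*]
  have hσ := hI (g := fun t => u t ^ 2 * tailWeight t) (by fun_prop)
    fun t h0 h1 h2 => by simp [*]
  have hL :=
    hI (g := fun t => (u'' t + 4 * u' t + 3 * u t + potentialGap t * u t) ^ 2 * logWeight t)
    (by fun_prop) fun t h0 h1 h2 => by simp [*]
  calc _ = ∫ t, (1 / 84 * ((u'' t + 3 * u' t + 2 * u t) ^ 2 * logWeight t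
        + (u' t + 2 * u t) ^ 2 * w t + u t ^ 2 * w t)
        - 10 ^ 12 * (u t ^ 2 * tailWeight t) + 1 / 2 * crossTerms t) := by
        rw [integral_add, integral_sub, integral_const_mul, integral_const_mul, integral_const_mul,
          integral_add, integral_add, hc0]
        · ring
        all_goals fun_prop
    _ ≤ _ := integral_mono (by fun_prop) hL fun t => by
      linarith [logWeight_coercive_pointwise t (u t) (u' t) (u'' t),
        jet_sq_mul_weight_le (hw0 t) (hwρ t) (u t) (u' t) (u'' t)]

end LogVariable

theorem integral_Ioi_eq_integral_exp (g : ℝ → ℝ) :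
    ∫ y in Ioi 0, g y = ∫ t, exp t * g (exp t) := by
  rw [← range_exp, ← image_univ, integral_image_eq_integral_abs_deriv_smul MeasurableSet.univ
    (fun t _ => (hasDerivAt_exp t).hasDerivWithinAt) exp_injective.injOn, Measure.restrict_univ]
  simp [abs_of_pos (exp_pos _)]

section ChangeOfVariables

variable {v : ℝ → ℝ}

theorem hasDerivAt_logCoord {t : ℝ} (hv : DifferentiableAt ℝ v (exp t)) :
    HasDerivAt (logCoord v) (logCoordDeriv v t) t := by
  refine ((hv.hasDerivAt.comp t (hasDerivAt_exp t)).div ((hasDerivAt_exp t).pow 2)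
    (by simp only [Pi.pow_apply]; positivity)).congr_deriv ?_
  simp only [logCoordDeriv, logCoord, Pi.pow_apply, Function.comp_apply]
  field_simp
  push_cast
  ring

theorem hasDerivAt_logCoordDeriv {t : ℝ} (hv : DifferentiableAt ℝ v (exp t))
    (hv' : DifferentiableAt ℝ (deriv v) (exp t)) :
    HasDerivAt (logCoordDeriv v) (logCoordDeriv2 v t) t := by
  refine (((hv'.hasDerivAt.comp t (hasDerivAt_exp t)).div (hasDerivAt_exp t)
    (exp_pos t).ne').sub ((hasDerivAt_logCoord hv).const_mul 2)).congr_deriv ?_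
  simp only [logCoordDeriv2, logCoordDeriv, Function.comp_apply]
  field_simp
  ring

theorem continuous_logCoordDeriv2 (hv : ContDiff ℝ 2 v) : Continuous (logCoordDeriv2 v) := by
  have h2 : Continuous (deriv (deriv v)) :=
    (contDiff_succ_iff_deriv.mp hv).2.2.continuous_deriv le_rfl
  unfold logCoordDeriv2 logCoord
  fun_prop (disch := first | norm_num | exact fun t => by positivity)

theorem hasCompactSupport_logCoord (hv : HasCompactSupport v) (hpos : tsupport v ⊆ Ioi 0) :
    HasCompactSupport (logCoord v) := by
  refine .intro (hv.image_of_continuousOn (continuousOn_log.mono fun y hy => (hpos hy).ne'))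
    fun t ht => ?_
  rw [logCoord, image_eq_zero_of_notMem_tsupport fun h => ht ⟨_, h, log_exp t⟩, zero_div]

theorem Hop_exp (t : ℝ) : Hop v (exp t) = -(logCoordDeriv2 v t + 4 * logCoordDeriv v t
    + 3 * logCoord v t + potentialGap t * logCoord v t) := by
  simp only [Hop, Vfun, logCoordDeriv2, logCoordDeriv, logCoord, potentialGap]
  field_simp
  ring

theorem integral_Hop_sq :
    ∫ y in Ioi 0, Hop v y ^ 2 / (y ^ 2 * (1 + log y ^ 2)) * y
      = ∫ t, (logCoordDeriv2 v t + 4 * logCoordDeriv v t + 3 * logCoord v t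
          + potentialGap t * logCoord v t) ^ 2 * logWeight t := by
  rw [integral_Ioi_eq_integral_exp]
  congr 1 with t
  rw [Hop_exp, log_exp, logWeight]
  field_simp

theorem integral_deriv_deriv_sq :
    ∫ y in Ioi 0, deriv (deriv v) y ^ 2 / (y ^ 2 * (1 + log y ^ 2)) * y
      = ∫ t, (logCoordDeriv2 v t + 3 * logCoordDeriv v t + 2 * logCoord v t) ^ 2
          * logWeight t := by
  rw [integral_Ioi_eq_integral_exp]
  congr 1 with t
  simp only [log_exp, logWeight, logCoordDeriv2, logCoordDeriv, logCoord]
  field_simp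
  ring

theorem integral_deriv_sq :
    ∫ y in Ioi 0, deriv v y ^ 2 / (y ^ 2 * (1 + log y ^ 2) * (1 + y ^ 2)) * y
      = ∫ t, (logCoordDeriv v t + 2 * logCoord v t) ^ 2 * dampedLogWeight t := by
  rw [integral_Ioi_eq_integral_exp]
  congr 1 with t
  simp only [log_exp, dampedLogWeight, logWeight, logCoordDeriv, logCoord]
  field_simp
  ring

theorem integral_sq_div_pow_four :
    ∫ y in Ioi 0, v y ^ 2 / (y ^ 4 * (1 + log y ^ 2) * (1 + y ^ 2)) * y
      = ∫ t, logCoord v t ^ 2 * dampedLogWeight t := by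
  rw [integral_Ioi_eq_integral_exp]
  congr 1 with t
  simp only [log_exp, dampedLogWeight, logWeight, logCoord]
  field_simp

theorem integral_sq_div_one_add_pow_eight :
    ∫ y in Ioi 0, v y ^ 2 / (1 + y ^ 8) * y = ∫ t, logCoord v t ^ 2 * tailWeight t := by
  rw [integral_Ioi_eq_integral_exp]
  congr 1 with t
  simp only [tailWeight, logCoord]
  field_simp

end ChangeOfVariables

/-- The logarithmically weighted subcoercivity estimate for `H`: there are constants
`c, C > 0` such that for every smooth compactly supported radial function `v` on `(0,∞)`,
the weighted `L²` norm of `Hv` controls weighted norms of `v''`, `v'`, `v` up to lower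
order terms. All integrals are against the 2D radial measure `y dy`. -/
theorem subcoercivity_of_H :
    ∃ c C : ℝ, 0 < c ∧ 0 < C ∧
      ∀ v : ℝ → ℝ, ContDiff ℝ (⊤ : ℕ∞) v → HasCompactSupport v →
        tsupport v ⊆ Set.Ioi 0 →
        (∫ y in Set.Ioi (0:ℝ), (Hop v y) ^ 2 / (y ^ 2 * (1 + (Real.log y) ^ 2)) * y)
          ≥ c * ((∫ y in Set.Ioi (0:ℝ),
                (deriv (deriv v) y) ^ 2 / (y ^ 2 * (1 + (Real.log y) ^ 2)) * y)
              + (∫ y in Set.Ioi (0:ℝ),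
                (deriv v y) ^ 2 / (y ^ 2 * (1 + (Real.log y) ^ 2) * (1 + y ^ 2)) * y)
              + (∫ y in Set.Ioi (0:ℝ),
                (v y) ^ 2 / (y ^ 4 * (1 + (Real.log y) ^ 2) * (1 + y ^ 2)) * y))
            - C * ((∫ y in Set.Ioi (0:ℝ), (deriv v y) ^ 2 / (1 + y ^ 6) * y)
              + (∫ y in Set.Ioi (0:ℝ), (v y) ^ 2 / (1 + y ^ 8) * y)) := by
  refine ⟨1 / 84, 10 ^ 12, by norm_num, by norm_num, fun v hv hcs hpos => ?_⟩
  have hv2 : ContDiff ℝ 2 v := hv.of_le (by norm_cast)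
  have hd : Differentiable ℝ v := hv2.differentiable two_ne_zero
  have hd' : Differentiable ℝ (deriv v) :=
    (contDiff_succ_iff_deriv.mp hv2).2.2.differentiable one_ne_zero
  have key := subcoercivity_logCoord (hasCompactSupport_logCoord hcs hpos)
    (fun t => hasDerivAt_logCoord (hd _)) (fun t => hasDerivAt_logCoordDeriv (hd _) (hd' _))
    (continuous_logCoordDeriv2 hv2) continuous_dampedLogWeight dampedLogWeight_nonneg
    dampedLogWeight_le_logWeight
  have hE : 0 ≤ ∫ y in Ioi (0 : ℝ), deriv v y ^ 2 / (1 + y ^ 6) * y :=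
    setIntegral_nonneg measurableSet_Ioi fun y (hy : 0 < y) => by positivity
  rw [integral_Hop_sq, integral_deriv_deriv_sq, integral_deriv_sq, integral_sq_div_pow_four,
    integral_sq_div_one_add_pow_eight]
  linarith [mul_nonneg (by norm_num : (0 : ℝ) ≤ 10 ^ 12) hE]
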